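/- Let W₁ = (V₀ ⊕ V₁) ⊗ S_{23} and W₂ = (V₀ ⊕ V₂) ⊗ T_{13} inside (ℂ²)^{⊗3} ⊗ (ℂ^n)^{⊗3}. Then W₁ + W₂ = V₁ ⊗ S_{23} ⊕ V₀ ⊗ (ℂ^n)^{⊗3} ⊕ V₂ ⊗ T_{13}, and dim(W₁ + W₂) = 7n³ + n² − 2n. -/

import Mathlib

/-- `|abc⟩ = e_a ⊗ e_b ⊗ e_c` in `(ℂ²)^{⊗3}`, in coordinates. -/
noncomputable def ket (v : Fin 3 → Fin 2) : (Fin 3 → Fin 2) → ℂ :=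
  fun w => if w = v then 1 else 0

noncomputable def f₁ : (Fin 3 → Fin 2) → ℂ := ket ![0, 0, 0]
noncomputable def f₂ : (Fin 3 → Fin 2) → ℂ := ket ![1, 1, 1]
noncomputable def f₃ : (Fin 3 → Fin 2) → ℂ :=
  (Real.sqrt 3 : ℂ)⁻¹ • (ket ![0, 0, 1] + ket ![1, 0, 0] + ket ![0, 1, 0])
noncomputable def f₄ : (Fin 3 → Fin 2) → ℂ :=
  (Real.sqrt 3 : ℂ)⁻¹ • (ket ![1, 1, 0] + ket ![0, 1, 1] + ket ![1, 0, 1])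
noncomputable def f₅ : (Fin 3 → Fin 2) → ℂ :=
  (Real.sqrt 6 : ℂ)⁻¹ • (ket ![0, 1, 0] + ket ![0, 0, 1] - (2 : ℂ) • ket ![1, 0, 0])
noncomputable def f₆ : (Fin 3 → Fin 2) → ℂ :=
  (Real.sqrt 6 : ℂ)⁻¹ • (ket ![1, 0, 1] + ket ![1, 1, 0] - (2 : ℂ) • ket ![0, 1, 1])
noncomputable def f₇ : (Fin 3 → Fin 2) → ℂ :=
  (Real.sqrt 6 : ℂ)⁻¹ • (ket ![0, 0, 1] + ket ![1, 0, 0] - (2 : ℂ) • ket ![0, 1, 0])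
noncomputable def f₈ : (Fin 3 → Fin 2) → ℂ :=
  (Real.sqrt 6 : ℂ)⁻¹ • (ket ![1, 1, 0] + ket ![0, 1, 1] - (2 : ℂ) • ket ![1, 0, 1])

/-- The totally symmetric subspace `V₀` of `(ℂ²)^{⊗3}`. -/
noncomputable def V₀ : Submodule ℂ ((Fin 3 → Fin 2) → ℂ) :=
  Submodule.span ℂ {f₁, f₂, f₃, f₄}

noncomputable def V₁ : Submodule ℂ ((Fin 3 → Fin 2) → ℂ) :=
  Submodule.span ℂ {f₅, f₆}

noncomputable def V₂ : Submodule ℂ ((Fin 3 → Fin 2) → ℂ) :=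
  Submodule.span ℂ {f₇, f₈}

/-- `S_{23} ⊂ (ℂ^n)^{⊗3}`: tensors symmetric in the last two factors. -/
noncomputable def S23 (n : ℕ) : Submodule ℂ ((Fin 3 → Fin n) → ℂ) where
  carrier := {Ψ | ∀ v : Fin 3 → Fin n, Ψ (v ∘ (Equiv.swap (1 : Fin 3) 2)) = Ψ v}
  add_mem' := by intro a b ha hb v; simp [ha v, hb v]
  zero_mem' := by intro v; rfl
  smul_mem' := by intro c Ψ hΨ v; simp [hΨ v]

/-- `T_{13} ⊂ (ℂ^n)^{⊗3}`: tensors with vanishing `1-3` partial trace. -/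
noncomputable def T13 (n : ℕ) : Submodule ℂ ((Fin 3 → Fin n) → ℂ) where
  carrier := {Ψ | ∀ j : Fin n, (∑ i : Fin n, Ψ ![i, j, i]) = 0}
  add_mem' := by
    intro a b ha hb j
    simpa [Finset.sum_add_distrib] using by rw [ha j, hb j]; ring
  zero_mem' := by intro j; simp
  smul_mem' := by intro c Ψ hΨ j; simp [← Finset.mul_sum, hΨ j]

/-- The "tensor product" of a subspace of `(ℂ²)^{⊗3}` with a subspace of
`(ℂ^n)^{⊗3}` inside `(ℂ²)^{⊗3} ⊗ (ℂ^n)^{⊗3}`, in coordinates. -/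
noncomputable def tensorSub (n : ℕ) (P : Submodule ℂ ((Fin 3 → Fin 2) → ℂ))
    (Q : Submodule ℂ ((Fin 3 → Fin n) → ℂ)) :
    Submodule ℂ ((Fin 3 → Fin 2) × (Fin 3 → Fin n) → ℂ) :=
  Submodule.span ℂ
    {f | ∃ p ∈ P, ∃ q ∈ Q, f = fun x => p x.1 * q x.2}


/-! The vectors `f₁, …, f₈` are linearly independent, so `V₀`, `V₁`, `V₂` are independent
subspaces, and this survives tensoring: every slice `a ↦ F (a, b)` of an element `F` of `P ⊗ Q`
lies in `P`. Distributing `⊗` over `⊔` and using `S₂₃ ⊔ T₁₃ = ⊤` turns `W₁ + W₂` into the direct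
sum on the right, of dimension `2 · n · C(n+1, 2) + 4n³ + 2(n³ − n)`.

`T₁₃` is the kernel of the partial trace over factors 1 and 3, which is already onto on the
diagonal tensors, and these lie in `S₂₃`; this gives `S₂₃ ⊔ T₁₃ = ⊤` and `dim T₁₃ = n³ − n`. -/

open TensorProduct

theorem Submodule.finrank_sup_of_disjoint {K V : Type*} [DivisionRing K] [AddCommGroup V]
    [Module K V] {s t : Submodule K V} [FiniteDimensional K s] [FiniteDimensional K t]
    (h : Disjoint s t) :
    Module.finrank K ↥(s ⊔ t) = Module.finrank K s + Module.finrank K t := by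
  have := Submodule.finrank_sup_add_finrank_inf_eq s t
  rwa [h.eq_bot, finrank_bot, add_zero] at this

section OuterProduct

variable (K : Type*) [CommSemiring K] (α β : Type*)

def outerProduct : (α → K) →ₗ[K] (β → K) →ₗ[K] (α × β → K) :=
  (LinearMap.mul K (α × β → K)).compl₁₂ (LinearMap.funLeft K K Prod.fst)
    (LinearMap.funLeft K K Prod.snd)

variable {K α β}

@[simp]
theorem outerProduct_apply (p : α → K) (q : β → K) :
    outerProduct K α β p q = fun x => p x.1 * q x.2 :=
  rfl

theorem map₂_outerProduct_le_iInf_comap (P : Submodule K (α → K))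
    (Q : Submodule K (β → K)) :
    Submodule.map₂ (outerProduct K α β) P Q ≤
      ⨅ b : β, P.comap (LinearMap.funLeft K K fun a => (a, b)) := by
  refine Submodule.map₂_le.2 fun p hp q _ => Submodule.mem_iInf _ |>.2 fun b => ?_
  change (fun a => p a * q b) ∈ P
  convert P.smul_mem (q b) hp using 1
  funext a
  simp [mul_comm]

theorem disjoint_map₂_outerProduct {P P' : Submodule K (α → K)} (h : Disjoint P P')
    (Q Q' : Submodule K (β → K)) :
    Disjoint (Submodule.map₂ (outerProduct K α β) P Q)
      (Submodule.map₂ (outerProduct K α β) P' Q') := by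
  rw [Submodule.disjoint_def]
  intro F hF hF'
  have hF := Submodule.mem_iInf _ |>.1 (map₂_outerProduct_le_iInf_comap P Q hF)
  have hF' := Submodule.mem_iInf _ |>.1 (map₂_outerProduct_le_iInf_comap P' Q' hF')
  funext ⟨a, b⟩
  exact congrFun (Submodule.disjoint_def.1 h _ (hF b) (hF' b)) a

variable [Fintype α] [Fintype β]

noncomputable def tensorPiEquiv : (α → K) ⊗[K] (β → K) ≃ₗ[K] (α × β → K) :=
  (TensorProduct.congr (Finsupp.linearEquivFunOnFinite K K α).symm
      (Finsupp.linearEquivFunOnFinite K K β).symm).trans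
    ((finsuppTensorFinsupp' K α β).trans (Finsupp.linearEquivFunOnFinite K K (α × β)))

theorem mk_compr₂_tensorPiEquiv :
    (mk K (α → K) (β → K)).compr₂ (tensorPiEquiv (K := K) (α := α) (β := β)).toLinearMap =
      outerProduct K α β := by
  refine LinearMap.ext fun p => LinearMap.ext fun q => funext fun ⟨a, b⟩ => ?_
  simp only [LinearMap.compr₂_apply, mk_apply, tensorPiEquiv, LinearEquiv.coe_coe,
    LinearEquiv.trans_apply, congr_tmul, Finsupp.linearEquivFunOnFinite_apply,
    finsuppTensorFinsupp'_apply_apply]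
  simp [Finsupp.linearEquivFunOnFinite]

end OuterProduct

theorem finrank_map₂_outerProduct {K α β : Type*} [Field K] [Fintype α] [Fintype β]
    (P : Submodule K (α → K)) (Q : Submodule K (β → K)) :
    Module.finrank K (Submodule.map₂ (outerProduct K α β) P Q) =
      Module.finrank K P * Module.finrank K Q := by
  rw [← mk_compr₂_tensorPiEquiv, ← Submodule.map_map₂, LinearEquiv.finrank_map_eq,
    ← range_mapIncl, LinearMap.finrank_range_of_inj
      (Module.Flat.tensorProduct_mapIncl_injective_of_left P Q), Module.finrank_tensorProduct]

theorem tensorSub_eq_map₂ (n : ℕ) (P : Submodule ℂ ((Fin 3 → Fin 2) → ℂ))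
    (Q : Submodule ℂ ((Fin 3 → Fin n) → ℂ)) :
    tensorSub n P Q = Submodule.map₂ (outerProduct ℂ _ _) P Q := by
  rw [Submodule.map₂_eq_span_image2, tensorSub]
  congr 1
  ext f
  simp [Set.image2, eq_comm]

theorem eq_zero_of_linear_system {a b c s t : ℂ} (hs : s ≠ 0) (ht : t ≠ 0)
    (h₁ : a * s + b * t + c * t = 0) (h₂ : a * s - 2 * b * t + c * t = 0)
    (h₃ : a * s + b * t - 2 * c * t = 0) : a = 0 ∧ b = 0 ∧ c = 0 := by
  have hb : 3 * b * t = 0 := by linear_combination h₁ - h₂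
  have hc : 3 * c * t = 0 := by linear_combination h₁ - h₃
  have ha : a * s = 0 := by linear_combination h₁ - (hb + hc) / 3
  simp_all

noncomputable def qubitBasis : (Fin 4 ⊕ Fin 2) ⊕ Fin 2 → (Fin 3 → Fin 2) → ℂ :=
  Sum.elim (Sum.elim ![f₁, f₂, f₃, f₄] ![f₅, f₆]) ![f₇, f₈]

theorem linearIndependent_qubitBasis : LinearIndependent ℂ qubitBasis := by
  rw [Fintype.linearIndependent_iff]
  intro g hg
  have h000 := congrFun hg ![0, 0, 0]
  have h111 := congrFun hg ![1, 1, 1]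
  have h001 := congrFun hg ![0, 0, 1]
  have h100 := congrFun hg ![1, 0, 0]
  have h010 := congrFun hg ![0, 1, 0]
  have h110 := congrFun hg ![1, 1, 0]
  have h011 := congrFun hg ![0, 1, 1]
  have h101 := congrFun hg ![1, 0, 1]
  simp +decide only [qubitBasis, f₁, Fin.isValue, f₂, f₃, smul_add, f₄, f₅, f₆, f₇, f₈,
    Finset.sum_apply, Pi.smul_apply, smul_eq_mul, Fintype.sum_sum_type, Sum.elim_inl,
    Matrix.cons_val', ket, ↓reduceIte, Pi.add_apply, mul_zero, add_zero, Matrix.cons_val_fin_one,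
    Fin.sum_univ_four, Matrix.cons_val_zero, mul_one, Matrix.cons_val_one, Matrix.cons_val,
    Sum.elim_inr, Pi.sub_apply, sub_self, Fin.sum_univ_two, Pi.zero_apply, zero_add, sub_zero,
    zero_sub, mul_neg] at h000 h111 h001 h100 h010 h110 h011 h101
  -- Only `f₃, f₅, f₇` are nonzero at `|001⟩, |100⟩, |010⟩`, and only `f₄, f₆, f₈` at
  -- `|110⟩, |011⟩, |101⟩`.
  have hs3 : (√3 : ℂ)⁻¹ ≠ 0 := by simp
  have hs6 : (√6 : ℂ)⁻¹ ≠ 0 := by simp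
  obtain ⟨h2, h4, h6⟩ := eq_zero_of_linear_system hs3 hs6 h001
    (by linear_combination h100) (by linear_combination h010)
  obtain ⟨h3, h5, h7⟩ := eq_zero_of_linear_system hs3 hs6 h110
    (by linear_combination h011) (by linear_combination h101)
  rintro ((i | i) | i) <;> fin_cases i <;> assumption

theorem V₀_eq_span_range : V₀ = Submodule.span ℂ (Set.range ![f₁, f₂, f₃, f₄]) := by
  simp only [V₀, Matrix.range_cons, Matrix.range_empty, Set.union_empty, Set.singleton_union]

theorem V₁_eq_span_range : V₁ = Submodule.span ℂ (Set.range ![f₅, f₆]) := by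
  simp only [V₁, Matrix.range_cons, Matrix.range_empty, Set.union_empty, Set.singleton_union]

theorem V₂_eq_span_range : V₂ = Submodule.span ℂ (Set.range ![f₇, f₈]) := by
  simp only [V₂, Matrix.range_cons, Matrix.range_empty, Set.union_empty, Set.singleton_union]

theorem V₀_sup_V₁_eq_span_range :
    V₀ ⊔ V₁ = Submodule.span ℂ (Set.range (Sum.elim ![f₁, f₂, f₃, f₄] ![f₅, f₆])) := by
  rw [Set.Sum.elim_range, Submodule.span_union, V₀_eq_span_range, V₁_eq_span_range]

theorem linearIndependent_V₀_V₁_basis :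
    LinearIndependent ℂ (Sum.elim ![f₁, f₂, f₃, f₄] ![f₅, f₆]) :=
  (linearIndependent_sum.1 linearIndependent_qubitBasis).1

theorem disjoint_V₀_V₁ : Disjoint V₀ V₁ := by
  rw [V₀_eq_span_range, V₁_eq_span_range]
  exact (linearIndependent_sum.1 linearIndependent_V₀_V₁_basis).2.2

theorem disjoint_V₀_sup_V₁_V₂ : Disjoint (V₀ ⊔ V₁) V₂ := by
  rw [V₀_sup_V₁_eq_span_range, V₂_eq_span_range]
  exact (linearIndependent_sum.1 linearIndependent_qubitBasis).2.2

theorem finrank_V₀ : Module.finrank ℂ V₀ = 4 := by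
  rw [V₀_eq_span_range]
  exact (finrank_span_eq_card (linearIndependent_sum.1 linearIndependent_V₀_V₁_basis).1).trans
    (Fintype.card_fin 4)

theorem finrank_V₁ : Module.finrank ℂ V₁ = 2 := by
  rw [V₁_eq_span_range]
  exact (finrank_span_eq_card (linearIndependent_sum.1 linearIndependent_V₀_V₁_basis).2.1).trans
    (Fintype.card_fin 2)

theorem finrank_V₂ : Module.finrank ℂ V₂ = 2 := by
  rw [V₂_eq_span_range]
  exact (finrank_span_eq_card (linearIndependent_sum.1 linearIndependent_qubitBasis).2.1).trans
    (Fintype.card_fin 2)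

section Qudits

variable (n : ℕ)

noncomputable def partialTrace13 : ((Fin 3 → Fin n) → ℂ) →ₗ[ℂ] (Fin n → ℂ) where
  toFun Ψ j := ∑ i, Ψ ![i, j, i]
  map_add' Ψ Φ := by funext j; simp [Finset.sum_add_distrib]
  map_smul' c Ψ := by funext j; simp [Finset.mul_sum]

theorem T13_eq_ker : T13 n = LinearMap.ker (partialTrace13 n) := by
  ext Ψ
  simp [T13, partialTrace13, funext_iff]

variable {n}

def diagonalTensor (g : Fin n → ℂ) : (Fin 3 → Fin n) → ℂ :=
  fun v => if v 0 = v 1 ∧ v 0 = v 2 then g (v 0) else 0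

theorem diagonalTensor_mem_S23 (g : Fin n → ℂ) : diagonalTensor g ∈ S23 n := by
  intro v
  simp [diagonalTensor, Equiv.swap_apply_of_ne_of_ne, and_comm]

theorem partialTrace13_diagonalTensor (g : Fin n → ℂ) :
    partialTrace13 n (diagonalTensor g) = g := by
  funext j
  simp [partialTrace13, diagonalTensor]

variable (n)

theorem map_partialTrace13_S23 : (S23 n).map (partialTrace13 n) = ⊤ :=
  eq_top_iff.2 fun g _ => ⟨_, diagonalTensor_mem_S23 g, partialTrace13_diagonalTensor g⟩

theorem S23_sup_T13 : S23 n ⊔ T13 n = ⊤ := by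
  rw [T13_eq_ker, ← Submodule.comap_map_eq, map_partialTrace13_S23, Submodule.comap_top]

theorem finrank_T13 : Module.finrank ℂ (T13 n) = n ^ 3 - n := by
  have hrange : LinearMap.range (partialTrace13 n) = ⊤ :=
    eq_top_iff.2 ((map_partialTrace13_S23 n).symm.le.trans LinearMap.map_le_range)
  have := LinearMap.finrank_range_add_finrank_ker (partialTrace13 n)
  rw [hrange, finrank_top] at this
  simp only [Module.finrank_fintype_fun_eq_card, Fintype.card_fun, Fintype.card_fin] at this
  rw [T13_eq_ker]
  omega

noncomputable def S23EquivSym2 : S23 n ≃ₗ[ℂ] (Fin n × Sym2 (Fin n) → ℂ) where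
  toFun Ψ x := Sym2.lift ⟨fun b c => Ψ.1 ![x.1, b, c], fun b c => by
    change Ψ.1 ![x.1, b, c] = Ψ.1 ![x.1, c, b]
    rw [← Ψ.2 ![x.1, b, c]]
    exact congrArg Ψ.1 (funext fun i => by fin_cases i <;> rfl)⟩ x.2
  map_add' Ψ Φ := by
    funext ⟨a, s⟩
    induction s using Sym2.ind
    simp
  map_smul' c Ψ := by
    funext ⟨a, s⟩
    induction s using Sym2.ind
    simp
  invFun g := ⟨fun v => g (v 0, s(v 1, v 2)), fun v => by
    simp [Equiv.swap_apply_of_ne_of_ne, Sym2.eq_swap]⟩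
  left_inv Ψ := Subtype.ext (funext fun v => congrArg Ψ.1 (FinVec.etaExpand_eq v))
  right_inv g := by
    funext ⟨a, s⟩
    induction s using Sym2.ind
    simp

theorem finrank_S23 : Module.finrank ℂ (S23 n) = n * (n + 1).choose 2 := by
  rw [LinearEquiv.finrank_eq (S23EquivSym2 n), Module.finrank_fintype_fun_eq_card,
    Fintype.card_prod, Sym2.card, Fintype.card_fin]

end Qudits

theorem dimension_count (n : ℕ) :
    2 * (n * (n + 1).choose 2) + 4 * n ^ 3 + 2 * (n ^ 3 - n) = 7 * n ^ 3 + n ^ 2 - 2 * n := by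
  have hchoose : (n + 1).choose 2 * 2 = (n + 1) * n := by
    simpa using (Nat.add_one_mul_choose_eq n 1).symm
  have hcube : n ≤ n ^ 3 := Nat.le_self_pow (by norm_num) n
  zify [hcube, show 2 * n ≤ 7 * n ^ 3 + n ^ 2 by nlinarith]
  have : ((n + 1).choose 2 : ℤ) * 2 = (n + 1) * n := by exact_mod_cast hchoose
  linear_combination n * this

theorem W1_plus_W2_general (n : ℕ) :
    tensorSub n (V₀ ⊔ V₁) (S23 n) ⊔ tensorSub n (V₀ ⊔ V₂) (T13 n) =
      tensorSub n V₁ (S23 n) ⊔ tensorSub n V₀ ⊤ ⊔ tensorSub n V₂ (T13 n) ∧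
    Module.finrank ℂ
      ↥(tensorSub n (V₀ ⊔ V₁) (S23 n) ⊔ tensorSub n (V₀ ⊔ V₂) (T13 n)) =
      7 * n ^ 3 + n ^ 2 - 2 * n := by
  have hsum : tensorSub n (V₀ ⊔ V₁) (S23 n) ⊔ tensorSub n (V₀ ⊔ V₂) (T13 n) =
      tensorSub n V₁ (S23 n) ⊔ tensorSub n V₀ ⊤ ⊔ tensorSub n V₂ (T13 n) := by
    simp only [tensorSub_eq_map₂]
    rw [Submodule.map₂_sup_left, Submodule.map₂_sup_left, ← S23_sup_T13,
      Submodule.map₂_sup_right]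
    ac_rfl
  refine ⟨hsum, ?_⟩
  have hV₁_V₀ := disjoint_map₂_outerProduct disjoint_V₀_V₁.symm (S23 n) ⊤
  have hV₀V₁_V₂ := disjoint_map₂_outerProduct disjoint_V₀_sup_V₁_V₂ ⊤ (T13 n)
  rw [hsum, tensorSub_eq_map₂, tensorSub_eq_map₂, tensorSub_eq_map₂,
    Submodule.finrank_sup_of_disjoint (hV₀V₁_V₂.mono_left (sup_le
      (Submodule.map₂_le_map₂ le_sup_right le_top) (Submodule.map₂_le_map₂ le_sup_left le_top))),
    Submodule.finrank_sup_of_disjoint hV₁_V₀]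
  rw [finrank_map₂_outerProduct, finrank_map₂_outerProduct, finrank_map₂_outerProduct,
    finrank_V₀, finrank_V₁, finrank_V₂, finrank_S23, finrank_T13, finrank_top,
    Module.finrank_fintype_fun_eq_card, Fintype.card_fun, Fintype.card_fin, Fintype.card_fin]
  exact dimension_count n

/-- `W₁ + W₂ = V₁ ⊗ S_{23} + V₀ ⊗ (ℂ^n)^{⊗3} + V₂ ⊗ T_{13}` and its
dimension is `7n³ + n² − 2n`. -/
theorem W1_plus_W2 (n : ℕ) (hn : 2 ≤ n) :
    tensorSub n (V₀ ⊔ V₁) (S23 n) ⊔ tensorSub n (V₀ ⊔ V₂) (T13 n) =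
      tensorSub n V₁ (S23 n) ⊔ tensorSub n V₀ ⊤ ⊔ tensorSub n V₂ (T13 n) ∧
    Module.finrank ℂ
      ↥(tensorSub n (V₀ ⊔ V₁) (S23 n) ⊔ tensorSub n (V₀ ⊔ V₂) (T13 n)) =
      7 * n ^ 3 + n ^ 2 - 2 * n :=
  W1_plus_W2_general n
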